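/- arXiv:2307.01810 — 5 statements merged into one kernel-verified Lean document; each statement's English description precedes it below -/
import Mathlib

section
/- In the symmetric model A(n,k) with uniform prior, for any signal s with x zeros and any box i, the conditional probability of no lock in box i given the whole signal vector equals the conditional probability given only the sign at box i and the total number of zeros: P(T_i = 0 | S = s, N = x) = P(T_i = 0 | S_i = s_i, N = x). -/
/-!
A signal `t` with `t i = s i` and as many minuses as `s` is `s ∘ σ` for a permutation `σ` of the
boxes fixing `i`, and relabelling the boxes by `σ` preserves the joint law of locks and signal as
well as the event `T_i = 0`. So on the event `S_i = s_i, N = x` every signal contributes the same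
amounts as `s` to the numerator and the denominator, which both become `#{t | …}` times their
value at `s`.
-/

open Finset

/-- Probability of signal vector `s` given lock position `γ` (symmetric testing
with sensitivity `a` and specificity `b`). -/
noncomputable def psg (n : ℕ) (a b : ℝ) (γ : Finset (Fin n)) (s : Fin n → Bool) : ℝ :=
  ∏ i : Fin n, if i ∈ γ then (if s i then a else 1 - a) else (if s i then 1 - b else b)

/-- Joint probability of the pair `(γ, s)` under the uniform prior on k-subsets. -/
noncomputable def jointP (n k : ℕ) (a b : ℝ) (γ : Finset (Fin n)) (s : Fin n → Bool) : ℝ :=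
  ((n.choose k : ℝ))⁻¹ * psg n a b γ s

/-- The number of minuses (zeros) in signal `s`. -/
def zeros (n : ℕ) (s : Fin n → Bool) : ℕ :=
  (Finset.univ.filter (fun i => s i = false)).card

/-- The set of possible lock positions: k-subsets of the n boxes. -/
def locksets (n k : ℕ) : Finset (Finset (Fin n)) :=
  Finset.powersetCard k Finset.univ

/-- Probability of observing signal vector `s` (uniform prior). -/
noncomputable def pS (n k : ℕ) (a b : ℝ) (s : Fin n → Bool) : ℝ :=
  ∑ γ ∈ locksets n k, jointP n k a b γ s

/-- Probability that the number of minuses `N` equals `x` (uniform prior). -/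
noncomputable def pN (n k : ℕ) (a b : ℝ) (x : ℕ) : ℝ :=
  ∑ s : Fin n → Bool, if zeros n s = x then pS n k a b s else 0

theorem Equiv.Perm.exists_comp_eq_of_card_fiber_eq {α β : Type*} [Fintype α] [DecidableEq β]
    {f g : α → β} (h : ∀ c, #{a | f a = c} = #{a | g a = c}) :
    ∃ σ : Equiv.Perm α, g ∘ σ = f :=
  ⟨Equiv.ofFiberEquiv fun c => Fintype.equivOfCardEq <| by simpa [Fintype.card_subtype] using h c,
    funext <| Equiv.ofFiberEquiv_map _⟩

theorem Equiv.Perm.exists_fixing_comp_eq_of_card_fiber_eq {α β : Type*} [Fintype α]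
    [DecidableEq α] [DecidableEq β] {f g : α → β} (h : ∀ c, #{a | f a = c} = #{a | g a = c})
    (i : α) (hi : f i = g i) :
    ∃ σ : Equiv.Perm α, σ i = i ∧ g ∘ σ = f := by
  obtain ⟨σ, hσ⟩ := exists_comp_eq_of_card_fiber_eq h
  have hgσ : g (σ i) = g i := (congrFun hσ i).trans hi
  -- the swap exchanges two points with the same value of `g`, so `g` does not see it
  refine ⟨Equiv.swap (σ i) i * σ, Equiv.swap_apply_left _ _, funext fun a => ?_⟩
  rw [← hσ, Function.comp_apply, Function.comp_apply, Equiv.Perm.mul_apply, Equiv.swap_apply_def]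
  split_ifs with h₁ h₂
  · rw [h₁, hgσ]
  · rw [h₂, hgσ]
  · rfl

theorem card_fiber_eq_of_card_false_eq {α : Type*} [Fintype α] {f g : α → Bool}
    (h : #{a | f a = false} = #{a | g a = false}) (c : Bool) :
    #{a | f a = c} = #{a | g a = c} := by
  cases c
  · exact h
  · have hf := card_filter_add_card_filter_not (s := univ) (fun a => f a = false)
    have hg := card_filter_add_card_filter_not (s := univ) (fun a => g a = false)
    simp only [Bool.not_eq_false] at hf hg
    omega

theorem exists_perm_fixing_comp_eq_of_zeros_eq {n : ℕ} {s t : Fin n → Bool} (i : Fin n)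
    (hi : t i = s i) (hz : zeros n t = zeros n s) :
    ∃ σ : Equiv.Perm (Fin n), σ i = i ∧ s ∘ σ = t :=
  Equiv.Perm.exists_fixing_comp_eq_of_card_fiber_eq (card_fiber_eq_of_card_false_eq hz) i hi

theorem psg_map_perm (n : ℕ) (a b : ℝ) (σ : Equiv.Perm (Fin n)) (γ : Finset (Fin n))
    (s : Fin n → Bool) :
    psg n a b (γ.map σ.toEmbedding) s = psg n a b γ (s ∘ σ) := by
  unfold psg
  rw [← Equiv.prod_comp σ]
  simp only [Finset.mem_map_equiv, Equiv.symm_apply_apply, Function.comp_apply]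

theorem map_perm_mem_locksets {n k : ℕ} (σ : Equiv.Perm (Fin n)) (γ : Finset (Fin n)) :
    γ.map σ.toEmbedding ∈ locksets n k ↔ γ ∈ locksets n k := by
  simp [locksets, mem_powersetCard]

theorem sum_jointP_comp_perm (n k : ℕ) (a b : ℝ) (σ : Equiv.Perm (Fin n)) (s : Fin n → Bool)
    (Γ : Finset (Finset (Fin n))) (hΓ : ∀ γ, γ ∈ Γ ↔ γ.map σ.toEmbedding ∈ Γ) :
    ∑ γ ∈ Γ, jointP n k a b γ (s ∘ σ) = ∑ γ ∈ Γ, jointP n k a b γ s :=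
  Finset.sum_equiv (Equiv.finsetCongr σ) hΓ fun γ _ => by
    simp only [jointP, Equiv.finsetCongr_apply, psg_map_perm]

theorem sum_sum_ite_eq_card_nsmul {ι κ M : Type*} [Fintype κ] [AddCommMonoid M]
    (Γ : Finset ι) (C : κ → Prop) [DecidablePred C] (F : ι → κ → M) (A : M)
    (hF : ∀ t, C t → ∑ γ ∈ Γ, F γ t = A) :
    ∑ γ ∈ Γ, ∑ t, (if C t then F γ t else 0) = #{t | C t} • A := by
  rw [Finset.sum_comm, ← Finset.sum_const, Finset.sum_filter]
  refine Finset.sum_congr rfl fun t _ => ?_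
  split_ifs with ht
  · exact hF t ht
  · exact Finset.sum_const_zero

theorem stmt7_general (n k x : ℕ) (a b : ℝ)
    (i : Fin n) (s : Fin n → Bool) (hs : zeros n s = x)
    (h2 : 0 < ∑ γ ∈ locksets n k, ∑ s' : Fin n → Bool,
        if s' i = s i ∧ zeros n s' = x then jointP n k a b γ s' else 0) :
    (∑ γ ∈ locksets n k, if i ∉ γ then jointP n k a b γ s else 0) / pS n k a b s =
      (∑ γ ∈ locksets n k, ∑ s' : Fin n → Bool,
          if i ∉ γ ∧ s' i = s i ∧ zeros n s' = x then jointP n k a b γ s' else 0) /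
        (∑ γ ∈ locksets n k, ∑ s' : Fin n → Bool,
          if s' i = s i ∧ zeros n s' = x then jointP n k a b γ s' else 0) := by
  subst hs
  have hclass : ∀ t, t i = s i ∧ zeros n t = zeros n s → ∃ σ : Equiv.Perm (Fin n),
      σ i = i ∧ s ∘ σ = t := fun t ht => exists_perm_fixing_comp_eq_of_zeros_eq i ht.1 ht.2
  have hfree : ∀ t, t i = s i ∧ zeros n t = zeros n s →
      ∑ γ ∈ locksets n k, (if i ∉ γ then jointP n k a b γ t else 0) =
        ∑ γ ∈ locksets n k, if i ∉ γ then jointP n k a b γ s else 0 := by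
    intro t ht
    obtain ⟨σ, hσi, rfl⟩ := hclass t ht
    simp only [← Finset.sum_filter]
    refine sum_jointP_comp_perm n k a b σ s _ fun γ => ?_
    have hσi' : σ.symm i = i := by rw [Equiv.symm_apply_eq, hσi]
    simp only [Finset.mem_filter, map_perm_mem_locksets, Finset.mem_map_equiv, hσi']
  have hsignal : ∀ t, t i = s i ∧ zeros n t = zeros n s → pS n k a b t = pS n k a b s := by
    intro t ht
    obtain ⟨σ, -, rfl⟩ := hclass t ht
    exact sum_jointP_comp_perm n k a b σ s _ fun γ => (map_perm_mem_locksets σ γ).symm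
  have hnum := sum_sum_ite_eq_card_nsmul _ _ _ _ hfree
  have hden := sum_sum_ite_eq_card_nsmul _ _ (fun γ t => jointP n k a b γ t) _ hsignal
  simp only [← ite_and, and_comm (b := i ∉ _)] at hnum
  rw [hnum, hden, nsmul_eq_mul, nsmul_eq_mul, mul_div_mul_left]
  intro hc
  simp [hden, hc] at h2

/-- In the symmetric model A(n,k) with uniform prior, for a signal s with x zeros,
P(T_i = 0 | S = s, N = x) = P(T_i = 0 | S_i = s_i, N = x): the conditional
probability of no lock in box i given the whole signal vector equals the one
given only the sign at box i and the total number of zeros. -/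
theorem stmt7 (n k x : ℕ) (hk : k ≤ n) (hx : x ≤ n) (a b : ℝ)
    (ha0 : 0 ≤ a) (ha1 : a ≤ 1) (hb0 : 0 ≤ b) (hb1 : b ≤ 1)
    (i : Fin n) (s : Fin n → Bool) (hs : zeros n s = x)
    (h1 : 0 < pS n k a b s)
    (h2 : 0 < ∑ γ ∈ locksets n k, ∑ s' : Fin n → Bool,
        if s' i = s i ∧ zeros n s' = x then jointP n k a b γ s' else 0) :
    (∑ γ ∈ locksets n k, if i ∉ γ then jointP n k a b γ s else 0) / pS n k a b s =
      (∑ γ ∈ locksets n k, ∑ s' : Fin n → Bool,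
          if i ∉ γ ∧ s' i = s i ∧ zeros n s' = x then jointP n k a b γ s' else 0) /
        (∑ γ ∈ locksets n k, ∑ s' : Fin n → Bool,
          if s' i = s i ∧ zeros n s' = x then jointP n k a b γ s' else 0) :=
  stmt7_general n k x a b i s hs h2
end

section
/- In the symmetric model A(n,k), for 0 < x < n, P(T = 0 | S = 0, N = x) = ((n−k)/x) · b · g_{n−1,k}(x−1)/g_{n,k}(x) and P(T = 0 | S = 1, N = x) = ((n−k)/(n−x)) · (1−b) · g_{n−1,k}(x)/g_{n,k}(x), where g_{m,k} is the pmf of the sum of independent Bin(k,1−a) and Bin(m−k,b) random variables. -/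
open Finset

/-- The Binomial(m, p) probability mass function. -/
noncomputable def binpmf (m : ℕ) (p : ℝ) (j : ℕ) : ℝ :=
  (m.choose j : ℝ) * p ^ j * (1 - p) ^ (m - j)

/-- Conditional probability that a fixed box `i` has no lock, given that its test
is minus and that the total number of minuses is `x`:
P(T_i = 0 | S_i = 0, N = x). -/
noncomputable def pminus (n k : ℕ) (a b : ℝ) (i : Fin n) (x : ℕ) : ℝ :=
  (∑ γ ∈ locksets n k, ∑ s : Fin n → Bool,
      if i ∉ γ ∧ s i = false ∧ zeros n s = x then jointP n k a b γ s else 0) /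
    (∑ γ ∈ locksets n k, ∑ s : Fin n → Bool,
      if s i = false ∧ zeros n s = x then jointP n k a b γ s else 0)

/-- Conditional probability that a fixed box `i` has no lock, given that its test
is plus and that the total number of minuses is `x`:
P(T_i = 0 | S_i = 1, N = x). -/
noncomputable def pplus (n k : ℕ) (a b : ℝ) (i : Fin n) (x : ℕ) : ℝ :=
  (∑ γ ∈ locksets n k, ∑ s : Fin n → Bool,
      if i ∉ γ ∧ s i = true ∧ zeros n s = x then jointP n k a b γ s else 0) /
    (∑ γ ∈ locksets n k, ∑ s : Fin n → Bool,
      if s i = true ∧ zeros n s = x then jointP n k a b γ s else 0)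

/-- The pmf `g_{m,k}` of the sum of independent Bin(k, 1-a) and Bin(m-k, b)
random variables (discrete convolution). -/
noncomputable def gconv (m k : ℕ) (a b : ℝ) (x : ℕ) : ℝ :=
  ∑ j ∈ Finset.range (x + 1), binpmf k (1 - a) j * binpmf (m - k) b (x - j)

section aux
variable {ι : Type*} [DecidableEq ι]

lemma prodIte (c d : ℝ) (u M : Finset ι) :
    ∏ i ∈ u, (if i ∈ M then c else d) = c ^ (u ∩ M).card * d ^ (u \ M).card := by
  rw [← Finset.prod_sdiff (inter_subset_left : u ∩ M ⊆ u), sdiff_inter_self_left]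
  have h1 : ∏ i ∈ u \ M, (if i ∈ M then c else d) = d ^ (u \ M).card := by
    rw [Finset.prod_congr rfl (fun i hi => if_neg (mem_sdiff.mp hi).2), prod_const]
  have h2 : ∏ i ∈ u ∩ M, (if i ∈ M then c else d) = c ^ (u ∩ M).card := by
    rw [Finset.prod_congr rfl (fun i hi => if_pos (mem_inter.mp hi).2), prod_const]
  rw [h1, h2]; ring

lemma countLemma (t γ : Finset ι) (hγ : γ ⊆ t) {x j : ℕ} (hj : j ≤ x) :
    ((t.powersetCard x).filter (fun M => (γ ∩ M).card = j)).card
      = γ.card.choose j * (t.card - γ.card).choose (x - j) := by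
  rw [← Finset.card_powersetCard j γ, ← Finset.card_sdiff_of_subset hγ,
    ← Finset.card_powersetCard (x - j) (t \ γ), ← Finset.card_product]
  apply Finset.card_bij' (fun M _ => (M ∩ γ, M \ γ)) (fun p _ => p.1 ∪ p.2)
  · rintro M hM
    rw [mem_filter, mem_powersetCard] at hM
    obtain ⟨⟨hMt, hMc⟩, hMj⟩ := hM
    rw [mem_product, mem_powersetCard, mem_powersetCard]
    have hic : (M ∩ γ).card = j := by rw [inter_comm] at hMj; exact hMj
    refine ⟨⟨inter_subset_right, hic⟩, sdiff_subset_sdiff hMt (le_refl γ), ?_⟩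
    show (M \ γ).card = x - j
    have := Finset.card_sdiff_add_card_inter M γ
    omega
  · rintro ⟨A, B⟩ hp
    rw [mem_product, mem_powersetCard, mem_powersetCard] at hp
    obtain ⟨⟨hAγ, hAc⟩, hBtγ, hBc⟩ := hp
    have hBγ : ∀ i ∈ B, i ∉ γ := fun i hi => (mem_sdiff.mp (hBtγ hi)).2
    have hdisj : Disjoint A B := by
      rw [Finset.disjoint_left]; exact fun i hiA hiB => hBγ i hiB (hAγ hiA)
    rw [mem_filter, mem_powersetCard]
    have hAB : γ ∩ (A ∪ B) = A := by
      ext i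
      simp only [mem_inter, mem_union]
      constructor
      · rintro ⟨hiγ, hiA | hiB⟩
        · exact hiA
        · exact absurd hiγ (hBγ i hiB)
      · intro hiA; exact ⟨hAγ hiA, Or.inl hiA⟩
    refine ⟨⟨union_subset (hAγ.trans hγ) (hBtγ.trans sdiff_subset), ?_⟩, by rw [hAB, hAc]⟩
    rw [card_union_of_disjoint hdisj, hAc, hBc]; omega
  · intro M hM
    rw [union_comm, sdiff_union_inter]
  · rintro ⟨A, B⟩ hp
    rw [mem_product, mem_powersetCard, mem_powersetCard] at hp
    obtain ⟨⟨hAγ, hAc⟩, hBtγ, hBc⟩ := hp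
    have hBγ : ∀ i ∈ B, i ∉ γ := fun i hi => (mem_sdiff.mp (hBtγ hi)).2
    have h1 : (A ∪ B) ∩ γ = A := by
      ext i
      simp only [mem_inter, mem_union]
      constructor
      · rintro ⟨hiA | hiB, hiγ⟩
        · exact hiA
        · exact absurd hiγ (hBγ i hiB)
      · intro hiA; exact ⟨Or.inl hiA, hAγ hiA⟩
    have h2 : (A ∪ B) \ γ = B := by
      ext i
      simp only [mem_sdiff, mem_union]
      constructor
      · rintro ⟨hiA | hiB, hiγ⟩
        · exact absurd (hAγ hiA) hiγ
        · exact hiB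
      · intro hiB; exact ⟨Or.inr hiB, hBγ i hiB⟩
    simp [h1, h2]

lemma coreSum (a b : ℝ) (t γ : Finset ι) (hγ : γ ⊆ t) (x : ℕ) :
    (∑ M ∈ t.powersetCard x, ∏ i ∈ t,
      (if i ∈ γ then (if i ∈ M then 1-a else a) else (if i ∈ M then b else 1-b)))
      = gconv t.card γ.card a b x := by
  have key : ∀ M ∈ t.powersetCard x,
      (∏ i ∈ t, (if i ∈ γ then (if i ∈ M then 1-a else a) else (if i ∈ M then b else 1-b)))
      = ((1-a) ^ (γ ∩ M).card * a ^ (γ.card - (γ ∩ M).card)) *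
        (b ^ (x - (γ ∩ M).card) * (1-b) ^ (t.card - γ.card - (x - (γ ∩ M).card))) := by
    intro M hM
    rw [mem_powersetCard] at hM
    obtain ⟨hMt, hMc⟩ := hM
    rw [← Finset.prod_sdiff hγ]
    have hγpart : (∏ i ∈ γ, (if i ∈ γ then (if i ∈ M then (1:ℝ)-a else a) else (if i ∈ M then b else 1-b)))
        = (1-a) ^ (γ ∩ M).card * a ^ (γ.card - (γ ∩ M).card) := by
      rw [Finset.prod_congr rfl (fun i hi => if_pos hi), prodIte]
      congr 2
      have := Finset.card_sdiff_add_card_inter γ M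
      omega
    have hout : (t \ γ) ∩ M = M \ γ := by
      ext i
      simp only [mem_inter, mem_sdiff]
      constructor
      · rintro ⟨⟨h1, h2⟩, h3⟩; exact ⟨h3, h2⟩
      · rintro ⟨h1, h2⟩; exact ⟨⟨hMt h1, h2⟩, h1⟩
    have houtpart : (∏ i ∈ t \ γ, (if i ∈ γ then (if i ∈ M then (1:ℝ)-a else a) else (if i ∈ M then b else 1-b)))
        = b ^ (x - (γ ∩ M).card) * (1-b) ^ (t.card - γ.card - (x - (γ ∩ M).card)) := by
      rw [Finset.prod_congr rfl (fun i hi => if_neg (mem_sdiff.mp hi).2), prodIte, hout]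
      have hc1 : (M \ γ).card = x - (γ ∩ M).card := by
        have := Finset.card_sdiff_add_card_inter M γ
        rw [inter_comm M γ] at this
        omega
      have hc2 : ((t \ γ) \ M).card = t.card - γ.card - (x - (γ ∩ M).card) := by
        have h3 := Finset.card_sdiff_add_card_inter (t \ γ) M
        rw [hout, hc1] at h3
        have h4 : (t \ γ).card = t.card - γ.card := Finset.card_sdiff_of_subset hγ
        omega
      rw [hc1, hc2]
    rw [hγpart, houtpart]; ring
  rw [Finset.sum_congr rfl key]
  have hmaps : ∀ M ∈ t.powersetCard x, (γ ∩ M).card ∈ Finset.range (x + 1) := by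
    intro M hM
    rw [mem_powersetCard] at hM
    rw [mem_range, Nat.lt_succ_iff]
    calc (γ ∩ M).card ≤ M.card := card_le_card inter_subset_right
    _ = x := hM.2
  rw [← Finset.sum_fiberwise_of_maps_to hmaps]
  unfold gconv binpmf
  apply Finset.sum_congr rfl
  intro j hj
  rw [mem_range, Nat.lt_succ_iff] at hj
  have : ∀ M ∈ (t.powersetCard x).filter (fun M => (γ ∩ M).card = j),
      ((1-a) ^ (γ ∩ M).card * a ^ (γ.card - (γ ∩ M).card)) *
        (b ^ (x - (γ ∩ M).card) * (1-b) ^ (t.card - γ.card - (x - (γ ∩ M).card)))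
      = ((1-a) ^ j * a ^ (γ.card - j)) * (b ^ (x - j) * (1-b) ^ (t.card - γ.card - (x - j))) := by
    intro M hM
    rw [mem_filter] at hM
    rw [hM.2]
  rw [Finset.sum_congr rfl this, Finset.sum_const, countLemma t γ hγ hj, nsmul_eq_mul]
  have ha : (1:ℝ) - (1 - a) = a := by ring
  rw [ha]
  push_cast
  ring
end aux


noncomputable def boolEquiv (n : ℕ) : Finset (Fin n) ≃ (Fin n → Bool) where
  toFun M := fun i => decide (i ∉ M)
  invFun s := univ.filter (fun i => s i = false)
  left_inv M := by ext i; simp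
  right_inv s := by funext i; cases h : s i <;> simp [h]

lemma sum_s_eq (n : ℕ) (F : (Fin n → Bool) → ℝ) :
    ∑ s : Fin n → Bool, F s = ∑ M : Finset (Fin n), F (fun i => decide (i ∉ M)) :=
  (Fintype.sum_equiv (boolEquiv n) _ F (fun _ => rfl)).symm

lemma zeros_decide (n : ℕ) (M : Finset (Fin n)) : zeros n (fun i => decide (i ∉ M)) = M.card := by
  unfold zeros
  congr 1
  ext i
  simp

lemma psg_decide (n : ℕ) (a b : ℝ) (γ M : Finset (Fin n)) :
    psg n a b γ (fun i => decide (i ∉ M))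
      = ∏ i : Fin n, (if i ∈ γ then (if i ∈ M then 1-a else a) else (if i ∈ M then b else 1-b)) := by
  unfold psg
  apply Finset.prod_congr rfl
  intro i _
  by_cases h : i ∈ M <;> simp [h]

lemma card_erase_univ (n : ℕ) (i : Fin n) : ((univ : Finset (Fin n)).erase i).card = n - 1 := by
  rw [card_erase_of_mem (mem_univ i), card_univ, Fintype.card_fin]

lemma inner_all (n x : ℕ) (a b : ℝ) (γ : Finset (Fin n)) :
    (∑ s : Fin n → Bool, if zeros n s = x then psg n a b γ s else 0)
      = gconv n γ.card a b x := by
  rw [sum_s_eq n (fun s => if zeros n s = x then psg n a b γ s else 0)]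
  simp only [zeros_decide, psg_decide]
  rw [← Finset.sum_filter]
  have hf : (univ : Finset (Finset (Fin n))).filter (fun M => M.card = x) = univ.powersetCard x := by
    ext M; simp [mem_powersetCard]
  rw [hf, coreSum a b univ γ (subset_univ γ) x, card_univ, Fintype.card_fin]

lemma inner_false (n x : ℕ) (hx : 0 < x) (a b : ℝ) (γ : Finset (Fin n)) (i : Fin n) :
    (∑ s : Fin n → Bool, if s i = false ∧ zeros n s = x then psg n a b γ s else 0)
      = (if i ∈ γ then 1-a else b) * gconv (n-1) (γ.erase i).card a b (x-1) := by
  rw [sum_s_eq n (fun s => if s i = false ∧ zeros n s = x then psg n a b γ s else 0)]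
  simp only [zeros_decide, psg_decide, decide_eq_false_iff_not, not_not]
  rw [← Finset.sum_filter]
  rw [← card_erase_univ n i,
    ← coreSum a b (univ.erase i) (γ.erase i) (erase_subset_erase i (subset_univ γ)) (x-1)]
  rw [Finset.mul_sum]
  apply Finset.sum_nbij' (i := fun M => M.erase i) (j := fun M' => insert i M')
  · intro M hM
    rw [mem_filter] at hM
    rw [mem_powersetCard]
    refine ⟨erase_subset_erase i (subset_univ M), ?_⟩
    rw [card_erase_of_mem hM.2.1, hM.2.2]
  · intro M' hM'
    rw [mem_powersetCard] at hM'
    have hiM' : i ∉ M' := fun h => (mem_erase.mp (hM'.1 h)).1 rfl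
    rw [mem_filter]
    refine ⟨mem_univ _, mem_insert_self i M', ?_⟩
    rw [card_insert_of_notMem hiM', hM'.2]
    omega
  · intro M hM
    rw [mem_filter] at hM
    exact insert_erase hM.2.1
  · intro M' hM'
    rw [mem_powersetCard] at hM'
    exact erase_insert (fun h => (mem_erase.mp (hM'.1 h)).1 rfl)
  · intro M hM
    rw [mem_filter] at hM
    obtain ⟨-, hiM, hMc⟩ := hM
    rw [← Finset.mul_prod_erase univ _ (mem_univ i)]
    congr 1
    · by_cases h : i ∈ γ <;> simp [h, hiM]
    · apply Finset.prod_congr rfl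
      intro j hj
      have hji : j ≠ i := (mem_erase.mp hj).1
      simp [Finset.mem_erase, hji]

lemma inner_true (n x : ℕ) (a b : ℝ) (γ : Finset (Fin n)) (i : Fin n) :
    (∑ s : Fin n → Bool, if s i = true ∧ zeros n s = x then psg n a b γ s else 0)
      = (if i ∈ γ then a else 1-b) * gconv (n-1) (γ.erase i).card a b x := by
  rw [sum_s_eq n (fun s => if s i = true ∧ zeros n s = x then psg n a b γ s else 0)]
  simp only [zeros_decide, psg_decide, decide_eq_true_eq]
  rw [← Finset.sum_filter]
  rw [← card_erase_univ n i,
    ← coreSum a b (univ.erase i) (γ.erase i) (erase_subset_erase i (subset_univ γ)) x]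
  rw [Finset.mul_sum]
  have hset : (univ : Finset (Finset (Fin n))).filter (fun M => i ∉ M ∧ M.card = x)
      = (univ.erase i).powersetCard x := by
    ext M
    simp only [mem_filter, mem_univ, true_and, mem_powersetCard, Finset.subset_erase]
    simp [subset_univ, and_comm]
  rw [hset]
  apply Finset.sum_congr rfl
  intro M hM
  rw [mem_powersetCard, Finset.subset_erase] at hM
  rw [← Finset.mul_prod_erase univ _ (mem_univ i)]
  congr 1
  · by_cases h : i ∈ γ <;> simp [h, hM.1.2]
  · apply Finset.prod_congr rfl
    intro j hj
    have hji : j ≠ i := (mem_erase.mp hj).1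
    simp [Finset.mem_erase, hji]

/-- In the symmetric model A(n,k), for 0 < x < n:
P(T=0 | S=0, N=x) = ((n-k)/x) · b · g_{n-1,k}(x-1)/g_{n,k}(x) and
P(T=0 | S=1, N=x) = ((n-k)/(n-x)) · (1-b) · g_{n-1,k}(x)/g_{n,k}(x). -/
theorem stmt8 (n k x : ℕ) (hk : k ≤ n) (hx0 : 0 < x) (hxn : x < n) (a b : ℝ)
    (ha0 : 0 < a) (ha1 : a < 1) (hb0 : 0 < b) (hb1 : b < 1)
    (hg : 0 < gconv n k a b x) (i : Fin n) :
    pminus n k a b i x =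
      (((n : ℝ) - k) / x) * b * (gconv (n - 1) k a b (x - 1) / gconv n k a b x) ∧
    pplus n k a b i x =
      (((n : ℝ) - k) / ((n : ℝ) - x)) * (1 - b) *
        (gconv (n - 1) k a b x / gconv n k a b x) := by
  have hn : 0 < n := lt_trans hx0 hxn
  -- abbreviations
  set g := gconv n k a b x with hgdef
  set G1 := gconv (n-1) k a b (x-1) with hG1
  set G1' := gconv (n-1) (k-1) a b (x-1) with hG1'
  set G2 := gconv (n-1) k a b x with hG2
  set G2' := gconv (n-1) (k-1) a b x with hG2'
  -- counting facts
  have hlock_card : (locksets n k).card = n.choose k := by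
    rw [locksets, card_powersetCard, card_univ, Fintype.card_fin]
  have hfilter_out : ∀ i' : Fin n, (locksets n k).filter (fun γ => i' ∉ γ)
      = ((univ : Finset (Fin n)).erase i').powersetCard k := by
    intro i'
    ext γ
    simp only [locksets, mem_filter, mem_powersetCard, Finset.subset_erase, subset_univ,
      true_and, and_comm]
  have hcard_out : ∀ i' : Fin n, ((locksets n k).filter (fun γ => i' ∉ γ)).card
      = (n-1).choose k := by
    intro i'
    rw [hfilter_out, card_powersetCard, card_erase_univ]
  have hcard_in : ∀ i' : Fin n, ((locksets n k).filter (fun γ => i' ∈ γ)).card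
      = n.choose k - (n-1).choose k := by
    intro i'
    have h1 := Finset.card_filter_add_card_filter_not (s := locksets n k)
      (p := fun γ => i' ∈ γ)
    have h2 := hcard_out i'
    rw [hlock_card] at h1
    omega
  -- choose bound
  have hCC : (n-1).choose k ≤ n.choose k := by
    calc (n-1).choose k ≤ (n-1+1).choose k := Nat.choose_le_choose k (Nat.le_succ _)
    _ = n.choose k := by congr 1; omega
  -- per-γ inner values assembled over locksets
  have hDm : ∀ i' : Fin n, (∑ γ ∈ locksets n k, ∑ s : Fin n → Bool,
        if s i' = false ∧ zeros n s = x then psg n a b γ s else 0)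
      = ((n.choose k - (n-1).choose k : ℕ) : ℝ) * ((1-a) * G1')
        + ((n-1).choose k : ℝ) * (b * G1) := by
    intro i'
    have step : ∀ γ ∈ locksets n k, (∑ s : Fin n → Bool,
          if s i' = false ∧ zeros n s = x then psg n a b γ s else 0)
        = (if i' ∈ γ then (1-a) * G1' else b * G1) := by
      intro γ hγ
      rw [locksets, mem_powersetCard] at hγ
      rw [inner_false n x hx0 a b γ i']
      by_cases h : i' ∈ γ
      · rw [if_pos h, if_pos h, card_erase_of_mem h, hγ.2]
      · rw [if_neg h, if_neg h, erase_eq_of_notMem h, hγ.2]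
    rw [Finset.sum_congr rfl step, Finset.sum_ite, Finset.sum_const, Finset.sum_const,
      hcard_in i', hcard_out i', nsmul_eq_mul, nsmul_eq_mul]
  have hDp : ∀ i' : Fin n, (∑ γ ∈ locksets n k, ∑ s : Fin n → Bool,
        if s i' = true ∧ zeros n s = x then psg n a b γ s else 0)
      = ((n.choose k - (n-1).choose k : ℕ) : ℝ) * (a * G2')
        + ((n-1).choose k : ℝ) * ((1-b) * G2) := by
    intro i'
    have step : ∀ γ ∈ locksets n k, (∑ s : Fin n → Bool,
          if s i' = true ∧ zeros n s = x then psg n a b γ s else 0)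
        = (if i' ∈ γ then a * G2' else (1-b) * G2) := by
      intro γ hγ
      rw [locksets, mem_powersetCard] at hγ
      rw [inner_true n x a b γ i']
      by_cases h : i' ∈ γ
      · rw [if_pos h, if_pos h, card_erase_of_mem h, hγ.2]
      · rw [if_neg h, if_neg h, erase_eq_of_notMem h, hγ.2]
    rw [Finset.sum_congr rfl step, Finset.sum_ite, Finset.sum_const, Finset.sum_const,
      hcard_in i', hcard_out i', nsmul_eq_mul, nsmul_eq_mul]
  -- numerators
  have hNum1 : (∑ γ ∈ locksets n k, ∑ s : Fin n → Bool,
        if i ∉ γ ∧ s i = false ∧ zeros n s = x then psg n a b γ s else 0)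
      = ((n-1).choose k : ℝ) * (b * G1) := by
    have step : ∀ γ ∈ locksets n k, (∑ s : Fin n → Bool,
          if i ∉ γ ∧ s i = false ∧ zeros n s = x then psg n a b γ s else 0)
        = (if i ∈ γ then 0 else b * G1) := by
      intro γ hγ
      rw [locksets, mem_powersetCard] at hγ
      by_cases h : i ∈ γ
      · rw [if_pos h]
        apply Finset.sum_eq_zero
        intro s _
        rw [if_neg]
        tauto
      · rw [if_neg h]
        have hc : ∀ s : Fin n → Bool, (i ∉ γ ∧ s i = false ∧ zeros n s = x)
            = (s i = false ∧ zeros n s = x) := by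
          intro s; simp [h]
        simp only [hc]
        rw [inner_false n x hx0 a b γ i, if_neg h, erase_eq_of_notMem h, hγ.2]
    rw [Finset.sum_congr rfl step, Finset.sum_ite, Finset.sum_const, Finset.sum_const,
      hcard_out i, nsmul_eq_mul, nsmul_eq_mul, mul_zero, zero_add]
  have hNum2 : (∑ γ ∈ locksets n k, ∑ s : Fin n → Bool,
        if i ∉ γ ∧ s i = true ∧ zeros n s = x then psg n a b γ s else 0)
      = ((n-1).choose k : ℝ) * ((1-b) * G2) := by
    have step : ∀ γ ∈ locksets n k, (∑ s : Fin n → Bool,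
          if i ∉ γ ∧ s i = true ∧ zeros n s = x then psg n a b γ s else 0)
        = (if i ∈ γ then 0 else (1-b) * G2) := by
      intro γ hγ
      rw [locksets, mem_powersetCard] at hγ
      by_cases h : i ∈ γ
      · rw [if_pos h]
        apply Finset.sum_eq_zero
        intro s _
        rw [if_neg]
        tauto
      · rw [if_neg h]
        have hc : ∀ s : Fin n → Bool, (i ∉ γ ∧ s i = true ∧ zeros n s = x)
            = (s i = true ∧ zeros n s = x) := by
          intro s; simp [h]
        simp only [hc]
        rw [inner_true n x a b γ i, if_neg h, erase_eq_of_notMem h, hγ.2]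
    rw [Finset.sum_congr rfl step, Finset.sum_ite, Finset.sum_const, Finset.sum_const,
      hcard_out i, nsmul_eq_mul, nsmul_eq_mul, mul_zero, zero_add]
  -- total mass
  have hF : (∑ γ ∈ locksets n k, ∑ s : Fin n → Bool,
        if zeros n s = x then psg n a b γ s else 0) = (n.choose k : ℝ) * g := by
    have step : ∀ γ ∈ locksets n k, (∑ s : Fin n → Bool,
          if zeros n s = x then psg n a b γ s else 0) = g := by
      intro γ hγ
      rw [locksets, mem_powersetCard] at hγ
      rw [inner_all n x a b γ, hγ.2]
    rw [Finset.sum_congr rfl step, Finset.sum_const, hlock_card, nsmul_eq_mul]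
  -- averaging identities
  have hswap1 : (∑ i' : Fin n, ∑ γ ∈ locksets n k, ∑ s : Fin n → Bool,
        if s i' = false ∧ zeros n s = x then psg n a b γ s else 0)
      = (x : ℝ) * ((n.choose k : ℝ) * g) := by
    rw [Finset.sum_comm]
    have hinner : ∀ γ ∈ locksets n k, (∑ i' : Fin n, ∑ s : Fin n → Bool,
          if s i' = false ∧ zeros n s = x then psg n a b γ s else 0)
        = (x : ℝ) * (∑ s : Fin n → Bool, if zeros n s = x then psg n a b γ s else 0) := by
      intro γ _
      rw [Finset.sum_comm, Finset.mul_sum]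
      apply Finset.sum_congr rfl
      intro s _
      by_cases hz : zeros n s = x
      · simp only [hz, and_true, if_pos rfl]
        rw [← Finset.sum_filter, Finset.sum_const, nsmul_eq_mul]
        congr 1
        rw [show (univ.filter (fun i' => s i' = false)).card = zeros n s from rfl, hz]
      · simp [hz]
    rw [Finset.sum_congr rfl hinner, ← Finset.mul_sum, hF]
  have hswap2 : (∑ i' : Fin n, ∑ γ ∈ locksets n k, ∑ s : Fin n → Bool,
        if s i' = true ∧ zeros n s = x then psg n a b γ s else 0)
      = ((n : ℝ) - x) * ((n.choose k : ℝ) * g) := by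
    rw [Finset.sum_comm]
    have hinner : ∀ γ ∈ locksets n k, (∑ i' : Fin n, ∑ s : Fin n → Bool,
          if s i' = true ∧ zeros n s = x then psg n a b γ s else 0)
        = ((n : ℝ) - x) * (∑ s : Fin n → Bool, if zeros n s = x then psg n a b γ s else 0) := by
      intro γ _
      rw [Finset.sum_comm, Finset.mul_sum]
      apply Finset.sum_congr rfl
      intro s _
      by_cases hz : zeros n s = x
      · simp only [hz, and_true, if_pos rfl]
        rw [← Finset.sum_filter, Finset.sum_const, nsmul_eq_mul]
        congr 1
        have hcc := Finset.card_filter_add_card_filter_not (s := (univ : Finset (Fin n)))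
          (p := fun i' => s i' = true)
        simp only [Bool.not_eq_true] at hcc
        rw [card_univ, Fintype.card_fin] at hcc
        have hzz : (univ.filter (fun i' => s i' = false)).card = x := hz
        have hle : x ≤ n := le_of_lt hxn
        have : (univ.filter (fun i' => s i' = true)).card = n - x := by omega
        rw [this, Nat.cast_sub hle]
      · simp [hz]
    rw [Finset.sum_congr rfl hinner, ← Finset.mul_sum, hF]
  -- denominators via averaging
  have key1 : (n : ℝ) * (((n.choose k - (n-1).choose k : ℕ) : ℝ) * ((1-a) * G1')
        + ((n-1).choose k : ℝ) * (b * G1)) = (x : ℝ) * ((n.choose k : ℝ) * g) := by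
    rw [← hswap1, Finset.sum_congr rfl (fun i' _ => hDm i'), Finset.sum_const,
      card_univ, Fintype.card_fin, nsmul_eq_mul]
  have key2 : (n : ℝ) * (((n.choose k - (n-1).choose k : ℕ) : ℝ) * (a * G2')
        + ((n-1).choose k : ℝ) * ((1-b) * G2)) = ((n : ℝ) - x) * ((n.choose k : ℝ) * g) := by
    rw [← hswap2, Finset.sum_congr rfl (fun i' _ => hDp i'), Finset.sum_const,
      card_univ, Fintype.card_fin, nsmul_eq_mul]
  -- nonzero facts
  have hnR : (0 : ℝ) < n := by exact_mod_cast hn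
  have hxR : (0 : ℝ) < x := by exact_mod_cast hx0
  have hnxR : (0 : ℝ) < (n : ℝ) - x := by
    have : (x : ℝ) < n := by exact_mod_cast hxn
    linarith
  have hCpos : (0 : ℝ) < (n.choose k : ℝ) := by exact_mod_cast Nat.choose_pos hk
  -- closed forms of denominators
  have hD1 : (((n.choose k - (n-1).choose k : ℕ) : ℝ) * ((1-a) * G1')
        + ((n-1).choose k : ℝ) * (b * G1)) = (x : ℝ) * ((n.choose k : ℝ) * g) / n := by
    have k1 := key1
    rw [Nat.cast_sub hCC] at k1
    rw [Nat.cast_sub hCC]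
    field_simp
    linarith [k1]
  have hD2 : (((n.choose k - (n-1).choose k : ℕ) : ℝ) * (a * G2')
        + ((n-1).choose k : ℝ) * ((1-b) * G2)) = ((n : ℝ) - x) * ((n.choose k : ℝ) * g) / n := by
    have k2 := key2
    rw [Nat.cast_sub hCC] at k2
    rw [Nat.cast_sub hCC]
    field_simp
    linarith [k2]
  -- pulling out the normalizing constant
  have hcinv : ((n.choose k : ℝ))⁻¹ ≠ 0 := inv_ne_zero (ne_of_gt hCpos)
  have hpull : ∀ (P : Finset (Fin n) → (Fin n → Bool) → Prop)
      (_ : ∀ γ s, Decidable (P γ s)),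
      (∑ γ ∈ locksets n k, ∑ s : Fin n → Bool, if P γ s then jointP n k a b γ s else 0)
      = ((n.choose k : ℝ))⁻¹ *
        (∑ γ ∈ locksets n k, ∑ s : Fin n → Bool, if P γ s then psg n a b γ s else 0) := by
    intro P hdec
    rw [Finset.mul_sum]
    apply Finset.sum_congr rfl
    intro γ _
    rw [Finset.mul_sum]
    apply Finset.sum_congr rfl
    intro s _
    unfold jointP
    split <;> simp
  -- choose identity
  have hCR : ((n-1).choose k : ℝ) * n = ((n : ℝ) - k) * (n.choose k : ℝ) := by
    have hNat : (n-1).choose k * n = n.choose k * (n - k) := by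
      have := Nat.choose_mul_succ_eq (n-1) k
      have hsub : n - 1 + 1 = n := by omega
      rw [hsub] at this
      exact this
    have := congrArg (Nat.cast : ℕ → ℝ) hNat
    push_cast [Nat.cast_sub hk] at this
    linarith
  constructor
  · -- pminus
    rw [pminus, hpull _ (fun γ s => inferInstance), hpull _ (fun γ s => inferInstance),
      mul_div_mul_left _ _ hcinv, hNum1, hDm i, hD1]
    rw [div_div_eq_mul_div,
      show ((n:ℝ) - k) / x * b * (G1 / g) = ((n:ℝ) - k) * b * G1 / ((x:ℝ) * g) by ring,
      div_eq_div_iff (by positivity) (by positivity)]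
    linear_combination (b * G1 * (x:ℝ) * g) * hCR
  · -- pplus
    rw [pplus, hpull _ (fun γ s => inferInstance), hpull _ (fun γ s => inferInstance),
      mul_div_mul_left _ _ hcinv, hNum2, hDp i, hD2]
    rw [div_div_eq_mul_div, mul_assoc (((n:ℝ) - k) / ((n:ℝ) - x)),
      ← mul_div_assoc (1 - b) G2 g, div_mul_div_comm,
      div_eq_div_iff (by positivity) (by positivity)]
    linear_combination ((1 - b) * G2 * ((n:ℝ) - x) * g) * hCR
end

section
/- In the symmetric model A(n,k), for 0 < x < n, the ratio r_{n,k}(x) = P(T=0|S=0,N=x)/P(T=0|S=1,N=x) equals (b/(1−b)) · ((n−x)/x) · g_{n−1,k}(x−1)/g_{n−1,k}(x), where g_{n−1,k} is the pmf of the sum of independent Bin(k,1−a) and Bin(n−1−k,b). -/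
open Finset

namespace Stmt9Aux

variable {n : ℕ}

lemma filter_mem_univ (γ : Finset (Fin n)) : univ.filter (· ∈ γ) = γ := by ext j; simp

lemma filter_notMem_univ (γ : Finset (Fin n)) : univ.filter (· ∉ γ) = γᶜ := by
  ext j; simp

lemma psg_union (a b : ℝ) (γ A B : Finset (Fin n)) (hA : A ⊆ γ) (hB : B ⊆ γᶜ) :
    psg n a b γ (fun j => decide (j ∉ A ∪ B)) =
      (1-a)^A.card * a^(γ.card - A.card) * (b^B.card * (1-b)^(γᶜ.card - B.card)) := by
  unfold psg
  rw [← Finset.prod_filter_mul_prod_filter_not univ (· ∈ γ), filter_mem_univ,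
    filter_notMem_univ]
  have h1 : ∀ j ∈ γ, (if j ∈ γ then (if (fun j => decide (j ∉ A ∪ B)) j then a else 1 - a)
      else (if (fun j => decide (j ∉ A ∪ B)) j then 1 - b else b)) =
      (if j ∈ A then 1-a else a) := by
    intro j hj
    have hjB : j ∉ B := fun h => (mem_compl.mp (hB h)) hj
    by_cases hjA : j ∈ A <;> simp [hj, hjA, hjB]
  have h2 : ∀ j ∈ γᶜ, (if j ∈ γ then (if (fun j => decide (j ∉ A ∪ B)) j then a else 1 - a)
      else (if (fun j => decide (j ∉ A ∪ B)) j then 1 - b else b)) =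
      (if j ∈ B then b else 1-b) := by
    intro j hj
    have hjγ : j ∉ γ := mem_compl.mp hj
    have hjA : j ∉ A := fun h => hjγ (hA h)
    by_cases hjB : j ∈ B <;> simp [hjγ, hjA, hjB]
  rw [Finset.prod_congr rfl h1, Finset.prod_congr rfl h2]
  have e1 : ∏ j ∈ γ, (if j ∈ A then 1-a else a) = (1-a)^A.card * a^(γ.card - A.card) := by
    rw [← Finset.prod_filter_mul_prod_filter_not γ (· ∈ A), Finset.filter_mem_eq_inter,
      inter_eq_right.mpr hA, ← Finset.sdiff_eq_filter,
      Finset.prod_congr rfl (fun x hx => if_pos hx),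
      Finset.prod_congr (rfl : γ \ A = γ \ A) (fun x hx => if_neg (mem_sdiff.mp hx).2),
      Finset.prod_const, Finset.prod_const, card_sdiff_of_subset hA]
  have e2 : ∏ j ∈ γᶜ, (if j ∈ B then b else 1-b) = b^B.card * (1-b)^(γᶜ.card - B.card) := by
    rw [← Finset.prod_filter_mul_prod_filter_not γᶜ (· ∈ B), Finset.filter_mem_eq_inter,
      inter_eq_right.mpr hB, ← Finset.sdiff_eq_filter,
      Finset.prod_congr rfl (fun x hx => if_pos hx),
      Finset.prod_congr (rfl : γᶜ \ B = γᶜ \ B) (fun x hx => if_neg (mem_sdiff.mp hx).2),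
      Finset.prod_const, Finset.prod_const, card_sdiff_of_subset hB]
  rw [e1, e2]

def boolEquiv (n : ℕ) : (Fin n → Bool) ≃ Finset (Fin n) where
  toFun s := univ.filter (fun i => s i = false)
  invFun Z := fun i => decide (i ∉ Z)
  left_inv s := by funext i; by_cases h : s i <;> simp [h]
  right_inv Z := by ext i; simp

lemma zeros_decide (Z : Finset (Fin n)) : zeros n (fun j => decide (j ∉ Z)) = Z.card := by
  unfold zeros
  congr 1
  ext j; simp

lemma sum_finset_pair (γ : Finset (Fin n)) (f : Finset (Fin n) → ℝ) :
    ∑ Z : Finset (Fin n), f Z = ∑ A ∈ γ.powerset, ∑ B ∈ γᶜ.powerset, f (A ∪ B) := by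
  rw [← Finset.sum_product']
  refine Finset.sum_nbij' (fun Z => (Z ∩ γ, Z \ γ)) (fun p => p.1 ∪ p.2) ?_ ?_ ?_ ?_ ?_
  · intro Z _
    simp only [mem_product, mem_powerset]
    exact ⟨inter_subset_right, fun j hj => mem_compl.mpr (mem_sdiff.mp hj).2⟩
  · intro p _; exact mem_univ _
  · intro Z _; exact sup_inf_sdiff Z γ
  · rintro ⟨A, B⟩ hp
    simp only [mem_product, mem_powerset] at hp
    obtain ⟨hA, hB⟩ := hp
    have hd : ∀ j ∈ B, j ∉ γ := fun j hj => mem_compl.mp (hB hj)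
    simp only [Prod.mk.injEq]
    constructor
    · ext j
      simp only [mem_inter, mem_union]
      constructor
      · rintro ⟨h | h, hγ⟩
        · exact h
        · exact absurd hγ (hd j h)
      · intro h; exact ⟨Or.inl h, hA h⟩
    · ext j
      simp only [mem_sdiff, mem_union]
      constructor
      · rintro ⟨h | h, hγ⟩
        · exact absurd (hA h) hγ
        · exact h
      · intro h; exact ⟨Or.inr h, hd j h⟩
  · intro Z _
    exact congrArg f (sup_inf_sdiff Z γ).symm

lemma binpmf_zero (p : ℝ) {m j : ℕ} (h : m < j) : binpmf m p j = 0 := by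
  unfold binpmf
  rw [Nat.choose_eq_zero_of_lt h]
  push_cast
  ring

lemma conv_core (a b : ℝ) (k' m' y : ℕ) (γ' δ : Finset (Fin n)) (hγ : γ'.card = k')
    (hδ : δ.card = m') :
    (∑ A ∈ γ'.powerset, ∑ B ∈ δ.powerset,
      if A.card + B.card = y then
        (1-a)^A.card * a^(k'-A.card) * (b^B.card * (1-b)^(m'-B.card)) else 0)
    = gconv (k' + m') k' a b y := by
  have inner : ∀ j : ℕ, (∑ B ∈ δ.powerset,
      if j + B.card = y then (1-a)^j * a^(k'-j) * (b^B.card * (1-b)^(m'-B.card)) else 0)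
      = (1-a)^j * a^(k'-j) * (if j ≤ y then binpmf m' b (y - j) else 0) := by
    intro j
    have h := Finset.sum_powerset_apply_card
      (f := fun t => if j + t = y then (1-a)^j * a^(k'-j) * (b^t * (1-b)^(m'-t)) else 0)
      (x := δ)
    rw [hδ] at h
    rw [h]
    by_cases hj : j ≤ y
    · by_cases hy : y - j ≤ m'
      · rw [Finset.sum_eq_single (y - j)]
        · rw [if_pos (by omega), if_pos hj]
          unfold binpmf
          rw [nsmul_eq_mul]
          push_cast
          ring
        · intro t _ ht
          rw [if_neg (by omega), smul_zero]
        · intro hc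
          exact absurd (mem_range.mpr (by omega)) hc
      · rw [if_pos hj, binpmf_zero b (by omega), mul_zero, Finset.sum_eq_zero]
        intro t ht
        rw [if_neg (by rw [mem_range] at ht; omega), smul_zero]
    · rw [if_neg hj, mul_zero, Finset.sum_eq_zero]
      intro t _
      rw [if_neg (by omega), smul_zero]
  have step1 : (∑ A ∈ γ'.powerset, ∑ B ∈ δ.powerset,
      if A.card + B.card = y then
        (1-a)^A.card * a^(k'-A.card) * (b^B.card * (1-b)^(m'-B.card)) else 0)
      = ∑ A ∈ γ'.powerset,
        (1-a)^A.card * a^(k'-A.card) * (if A.card ≤ y then binpmf m' b (y - A.card) else 0) :=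
    Finset.sum_congr rfl fun A _ => inner A.card
  rw [step1]
  have h2 := Finset.sum_powerset_apply_card
    (f := fun t => (1-a)^t * a^(k'-t) * (if t ≤ y then binpmf m' b (y - t) else 0)) (x := γ')
  rw [hγ] at h2
  rw [h2]
  have step2 : ∀ j : ℕ, (k'.choose j) • ((1-a)^j * a^(k'-j) * (if j ≤ y then binpmf m' b (y - j) else 0))
      = (if j ≤ y then binpmf k' (1-a) j * binpmf m' b (y - j) else 0) := by
    intro j
    by_cases hj : j ≤ y
    · rw [if_pos hj, if_pos hj, nsmul_eq_mul]
      unfold binpmf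
      rw [show (1:ℝ) - (1-a) = a by ring]
      ring
    · rw [if_neg hj, if_neg hj, mul_zero, smul_zero]
  rw [Finset.sum_congr rfl fun j _ => step2 j]
  have hgz : ∀ j, ¬ j ≤ y → (if j ≤ y then binpmf k' (1-a) j * binpmf m' b (y - j) else 0) = 0 := by
    intro j hj; rw [if_neg hj]
  have hkz : ∀ j, k' < j → (if j ≤ y then binpmf k' (1-a) j * binpmf m' b (y - j) else 0) = 0 := by
    intro j hj
    rw [binpmf_zero (1-a) hj]
    simp
  have hM1 : Finset.range (k'+1) ⊆ Finset.range (max k' y + 1) :=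
    Finset.range_subset_range.mpr (by omega)
  have hM2 : Finset.range (y+1) ⊆ Finset.range (max k' y + 1) :=
    Finset.range_subset_range.mpr (by omega)
  rw [Finset.sum_subset hM1 (fun j _ hj => hkz j (by simp only [mem_range] at *; omega)),
    ← Finset.sum_subset hM2 (fun j _ hj => hgz j (by simp only [mem_range] at *; omega))]
  unfold gconv
  rw [Nat.add_sub_cancel_left]
  refine Finset.sum_congr rfl fun j hj => ?_
  rw [if_pos (by rw [mem_range] at hj; omega)]

lemma sum_s (a b : ℝ) (x : ℕ) (hx : 0 < x) (γ : Finset (Fin n)) (i : Fin n) (hi : i ∉ γ)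
    (c : Bool) :
    (∑ s : Fin n → Bool, if s i = c ∧ zeros n s = x then psg n a b γ s else 0)
    = cond c ((1-b) * gconv (n-1) γ.card a b x) (b * gconv (n-1) γ.card a b (x-1)) := by
  classical
  have hic : i ∈ γᶜ := mem_compl.mpr hi
  have hcc : γ.card + γᶜ.card = n := by
    rw [Finset.card_add_card_compl]
    simp
  have hc1 : 1 ≤ γᶜ.card := Finset.card_pos.mpr ⟨i, hic⟩
  set δ := γᶜ.erase i with hδdef
  have hδc : δ.card = γᶜ.card - 1 := Finset.card_erase_of_mem hic
  have hiδ : i ∉ δ := Finset.notMem_erase i γᶜ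
  have hins : γᶜ = insert i δ := (Finset.insert_erase hic).symm
  have hδsub : δ ⊆ γᶜ := Finset.erase_subset i γᶜ
  have hstep1 : (∑ s : Fin n → Bool, if s i = c ∧ zeros n s = x then psg n a b γ s else 0)
      = ∑ Z : Finset (Fin n),
          (if decide (i ∉ Z) = c ∧ Z.card = x then psg n a b γ (fun j => decide (j ∉ Z)) else 0) := by
    rw [← Equiv.sum_comp (boolEquiv n).symm
      (fun s => if s i = c ∧ zeros n s = x then psg n a b γ s else 0)]
    refine Fintype.sum_congr _ _ fun Z => ?_
    have hz : (boolEquiv n).symm Z = fun j => decide (j ∉ Z) := rfl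
    rw [hz, zeros_decide]
  rw [hstep1, sum_finset_pair γ]
  have hsplit : ∀ A ∈ γ.powerset, (∑ B ∈ γᶜ.powerset,
      (if decide (i ∉ A ∪ B) = c ∧ (A ∪ B).card = x then
        psg n a b γ (fun j => decide (j ∉ A ∪ B)) else 0))
      = (∑ B ∈ δ.powerset,
          (if decide (i ∉ A ∪ B) = c ∧ (A ∪ B).card = x then
            psg n a b γ (fun j => decide (j ∉ A ∪ B)) else 0))
        + ∑ B ∈ δ.powerset,
          (if decide (i ∉ A ∪ insert i B) = c ∧ (A ∪ insert i B).card = x then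
            psg n a b γ (fun j => decide (j ∉ A ∪ insert i B)) else 0) := by
    intro A _
    rw [hins, Finset.sum_powerset_insert hiδ]
  rw [Finset.sum_congr rfl hsplit, Finset.sum_add_distrib]
  cases c with
  | false =>
    have hz1 : ∀ A ∈ γ.powerset, (∑ B ∈ δ.powerset,
        (if decide (i ∉ A ∪ B) = false ∧ (A ∪ B).card = x then
          psg n a b γ (fun j => decide (j ∉ A ∪ B)) else 0)) = 0 := by
      intro A hA
      refine Finset.sum_eq_zero fun B hB => ?_
      have hiA : i ∉ A := fun h => hi (mem_powerset.mp hA h)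
      have hiB : i ∉ B := fun h => hiδ (mem_powerset.mp hB h)
      rw [if_neg]
      rintro ⟨h1, -⟩
      simp only [decide_eq_false_iff_not, not_not, mem_union] at h1
      rcases h1 with h | h
      · exact hiA h
      · exact hiB h
    rw [Finset.sum_congr rfl hz1, Finset.sum_const, smul_zero, zero_add]
    have hterm : ∀ A ∈ γ.powerset, ∀ B ∈ δ.powerset,
        (if decide (i ∉ A ∪ insert i B) = false ∧ (A ∪ insert i B).card = x then
          psg n a b γ (fun j => decide (j ∉ A ∪ insert i B)) else 0)
        = b * (if A.card + B.card = x - 1 then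
            (1-a)^A.card * a^(γ.card - A.card) * (b^B.card * (1-b)^(δ.card - B.card)) else 0) := by
      intro A hA B hB
      rw [mem_powerset] at hA hB
      have hiB : i ∉ B := fun h => hiδ (hB h)
      have hBsub : insert i B ⊆ γᶜ := by
        rw [hins]
        exact Finset.insert_subset_insert i hB
      have hdecide : decide (i ∉ A ∪ insert i B) = false := by
        simp
      have hdisj : Disjoint A (insert i B) := by
        refine Finset.disjoint_left.mpr fun t ht ht' => ?_
        exact (mem_compl.mp (hBsub ht')) (hA ht)
      have hcard : (A ∪ insert i B).card = A.card + B.card + 1 := by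
        rw [Finset.card_union_of_disjoint hdisj, Finset.card_insert_of_notMem hiB]
        omega
      have hcond : (A.card + B.card + 1 = x) ↔ (A.card + B.card = x - 1) := by omega
      rw [hdecide, hcard]
      by_cases h : A.card + B.card = x - 1
      · rw [if_pos ⟨rfl, hcond.mpr h⟩, if_pos h, psg_union a b γ A (insert i B) hA hBsub,
          Finset.card_insert_of_notMem hiB]
        have he : γᶜ.card - (B.card + 1) = δ.card - B.card := by omega
        rw [he, pow_succ]
        ring
      · rw [if_neg (fun hh => h (hcond.mp hh.2)), if_neg h, mul_zero]
    calc ∑ A ∈ γ.powerset, ∑ B ∈ δ.powerset,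
          (if decide (i ∉ A ∪ insert i B) = false ∧ (A ∪ insert i B).card = x then
            psg n a b γ (fun j => decide (j ∉ A ∪ insert i B)) else 0)
        = ∑ A ∈ γ.powerset, ∑ B ∈ δ.powerset,
            b * (if A.card + B.card = x - 1 then
              (1-a)^A.card * a^(γ.card - A.card) * (b^B.card * (1-b)^(δ.card - B.card)) else 0) := by
          refine Finset.sum_congr rfl fun A hA => Finset.sum_congr rfl fun B hB => ?_
          exact hterm A hA B hB
      _ = b * ∑ A ∈ γ.powerset, ∑ B ∈ δ.powerset,
            (if A.card + B.card = x - 1 then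
              (1-a)^A.card * a^(γ.card - A.card) * (b^B.card * (1-b)^(δ.card - B.card)) else 0) := by
          rw [Finset.mul_sum]
          exact Finset.sum_congr rfl fun A _ => (Finset.mul_sum _ _ _).symm
      _ = b * gconv (γ.card + δ.card) γ.card a b (x-1) := by
          rw [conv_core a b γ.card δ.card (x-1) γ δ rfl rfl]
      _ = b * gconv (n-1) γ.card a b (x-1) := by
          congr 2
          omega
  | true =>
    have hz2 : ∀ A ∈ γ.powerset, (∑ B ∈ δ.powerset,
        (if decide (i ∉ A ∪ insert i B) = true ∧ (A ∪ insert i B).card = x then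
          psg n a b γ (fun j => decide (j ∉ A ∪ insert i B)) else 0)) = 0 := by
      intro A _
      refine Finset.sum_eq_zero fun B _ => ?_
      rw [if_neg]
      rintro ⟨h1, -⟩
      simp at h1
    rw [Finset.sum_congr rfl hz2, Finset.sum_const, smul_zero, add_zero]
    have hterm : ∀ A ∈ γ.powerset, ∀ B ∈ δ.powerset,
        (if decide (i ∉ A ∪ B) = true ∧ (A ∪ B).card = x then
          psg n a b γ (fun j => decide (j ∉ A ∪ B)) else 0)
        = (1-b) * (if A.card + B.card = x then
            (1-a)^A.card * a^(γ.card - A.card) * (b^B.card * (1-b)^(δ.card - B.card)) else 0) := by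
      intro A hA B hB
      rw [mem_powerset] at hA hB
      have hiA : i ∉ A := fun h => hi (hA h)
      have hiB : i ∉ B := fun h => hiδ (hB h)
      have hBsub : B ⊆ γᶜ := hB.trans hδsub
      have hBle : B.card ≤ δ.card := Finset.card_le_card hB
      have hdecide : decide (i ∉ A ∪ B) = true := by
        simp only [decide_eq_true_eq, mem_union]
        rintro (h | h)
        · exact hiA h
        · exact hiB h
      have hdisj : Disjoint A B := by
        refine Finset.disjoint_left.mpr fun t ht ht' => ?_
        exact (mem_compl.mp (hBsub ht')) (hA ht)
      have hcard : (A ∪ B).card = A.card + B.card :=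
        Finset.card_union_of_disjoint hdisj
      rw [hdecide, hcard]
      by_cases h : A.card + B.card = x
      · rw [if_pos ⟨rfl, h⟩, if_pos h, psg_union a b γ A B hA hBsub]
        have he : γᶜ.card - B.card = (δ.card - B.card) + 1 := by omega
        rw [he, pow_succ]
        ring
      · rw [if_neg (fun hh => h hh.2), if_neg h, mul_zero]
    calc ∑ A ∈ γ.powerset, ∑ B ∈ δ.powerset,
          (if decide (i ∉ A ∪ B) = true ∧ (A ∪ B).card = x then
            psg n a b γ (fun j => decide (j ∉ A ∪ B)) else 0)
        = ∑ A ∈ γ.powerset, ∑ B ∈ δ.powerset,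
            (1-b) * (if A.card + B.card = x then
              (1-a)^A.card * a^(γ.card - A.card) * (b^B.card * (1-b)^(δ.card - B.card)) else 0) := by
          refine Finset.sum_congr rfl fun A hA => Finset.sum_congr rfl fun B hB => ?_
          exact hterm A hA B hB
      _ = (1-b) * ∑ A ∈ γ.powerset, ∑ B ∈ δ.powerset,
            (if A.card + B.card = x then
              (1-a)^A.card * a^(γ.card - A.card) * (b^B.card * (1-b)^(δ.card - B.card)) else 0) := by
          rw [Finset.mul_sum]
          exact Finset.sum_congr rfl fun A _ => (Finset.mul_sum _ _ _).symm
      _ = (1-b) * gconv (γ.card + δ.card) γ.card a b x := by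
          rw [conv_core a b γ.card δ.card x γ δ rfl rfl]
      _ = (1-b) * gconv (n-1) γ.card a b x := by
          congr 2
          omega

lemma zeros_comp (s : Fin n → Bool) (σ : Equiv.Perm (Fin n)) :
    zeros n (fun j => s (σ j)) = zeros n s := by
  unfold zeros
  have h : univ.filter (fun j => s (σ j) = false)
      = (univ.filter (fun j => s j = false)).image σ.symm := by
    ext j
    simp only [mem_filter, mem_univ, true_and, Finset.mem_image]
    constructor
    · intro h
      exact ⟨σ j, h, by simp⟩
    · rintro ⟨u, hu, rfl⟩
      rw [σ.apply_symm_apply]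
      exact hu
  rw [h, Finset.card_image_of_injective _ σ.symm.injective]

lemma psg_comp (a b : ℝ) (γ : Finset (Fin n)) (s : Fin n → Bool) (σ : Equiv.Perm (Fin n))
    (hσ : ∀ t, σ (σ t) = t) :
    psg n a b (γ.image σ) (fun j => s (σ j)) = psg n a b γ s := by
  unfold psg
  rw [← Equiv.prod_comp σ]
  refine Fintype.prod_congr _ _ fun j => ?_
  have h1 : σ j ∈ γ.image σ ↔ j ∈ γ := by
    simp [Finset.mem_image, σ.injective.eq_iff]
  have h2 : s (σ (σ j)) = s j := by rw [hσ]
  by_cases hj : j ∈ γ <;> simp only [h1, hj, if_pos, if_neg, h2, if_true, if_false]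

lemma D_symm (k x : ℕ) (a b : ℝ) (c : Bool) (i j : Fin n) :
    (∑ γ ∈ locksets n k, ∑ s : Fin n → Bool,
      if s i = c ∧ zeros n s = x then jointP n k a b γ s else 0)
    = ∑ γ ∈ locksets n k, ∑ s : Fin n → Bool,
      if s j = c ∧ zeros n s = x then jointP n k a b γ s else 0 := by
  classical
  set σ := Equiv.swap i j with hσdef
  have hσ : ∀ t, σ (σ t) = t := fun t => Equiv.swap_apply_self i j t
  have himg : ∀ γ : Finset (Fin n), (γ.image σ).image σ = γ := by
    intro γ
    rw [Finset.image_image, show (⇑σ ∘ ⇑σ) = id from funext hσ, Finset.image_id]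
  have hmem : ∀ γ : Finset (Fin n), γ ∈ locksets n k → γ.image σ ∈ locksets n k := by
    intro γ hγ
    simp only [locksets, Finset.mem_powersetCard] at hγ ⊢
    exact ⟨Finset.subset_univ _, by rw [Finset.card_image_of_injective _ σ.injective]; exact hγ.2⟩
  rw [← Finset.sum_product', ← Finset.sum_product']
  refine Finset.sum_nbij' (fun p => (p.1.image σ, fun t => p.2 (σ t)))
    (fun p => (p.1.image σ, fun t => p.2 (σ t))) ?_ ?_ ?_ ?_ ?_
  · rintro ⟨γ, s⟩ hp
    simp only [Finset.mem_product] at hp ⊢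
    exact ⟨hmem γ hp.1, mem_univ _⟩
  · rintro ⟨γ, s⟩ hp
    simp only [Finset.mem_product] at hp ⊢
    exact ⟨hmem γ hp.1, mem_univ _⟩
  · rintro ⟨γ, s⟩ _
    simp only [Prod.mk.injEq]
    exact ⟨himg γ, funext fun t => by simp only [hσ]⟩
  · rintro ⟨γ, s⟩ _
    simp only [Prod.mk.injEq]
    exact ⟨himg γ, funext fun t => by simp only [hσ]⟩
  · rintro ⟨γ, s⟩ _
    have hs : s (σ j) = s i := by rw [hσdef, Equiv.swap_apply_right]
    simp only
    rw [hs, zeros_comp s σ]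
    have hj : jointP n k a b (γ.image σ) (fun t => s (σ t)) = jointP n k a b γ s := by
      unfold jointP
      rw [psg_comp a b γ s σ hσ]
    rw [hj]

lemma D_count (k x : ℕ) (a b : ℝ) (c : Bool) :
    (∑ i : Fin n, ∑ γ ∈ locksets n k, ∑ s : Fin n → Bool,
      if s i = c ∧ zeros n s = x then jointP n k a b γ s else 0)
    = (cond c ((n - x : ℕ) : ℝ) (x : ℝ)) *
      ∑ γ ∈ locksets n k, ∑ s : Fin n → Bool,
        (if zeros n s = x then jointP n k a b γ s else 0) := by
  classical
  rw [Finset.sum_comm, Finset.mul_sum]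
  refine Finset.sum_congr rfl fun γ _ => ?_
  rw [Finset.sum_comm, Finset.mul_sum]
  refine Finset.sum_congr rfl fun s _ => ?_
  by_cases hz : zeros n s = x
  · simp only [hz, and_true, if_pos rfl]
    rw [← Finset.sum_filter]
    rw [Finset.sum_const]
    have hcard : (univ.filter (fun i => s i = c)).card = (cond c (n - x) x : ℕ) := by
      cases c with
      | false =>
        simpa [zeros, hz] using hz
      | true =>
        have hsplit := Finset.card_filter_add_card_filter_not
          (s := (univ : Finset (Fin n))) (p := fun i => s i = true)
        have hfalse : (univ.filter (fun i => ¬ s i = true)).card = x := by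
          simp only [Bool.not_eq_true]
          simpa [zeros] using hz
        have huniv : (univ : Finset (Fin n)).card = n := by simp
        simp only [Bool.cond_true]
        omega
    rw [hcard, nsmul_eq_mul]
    cases c <;> simp
  · simp [hz]

lemma numer (k x : ℕ) (a b : ℝ) (hx : 0 < x) (i : Fin n) (c : Bool) :
    (∑ γ ∈ locksets n k, ∑ s : Fin n → Bool,
      if i ∉ γ ∧ s i = c ∧ zeros n s = x then jointP n k a b γ s else 0)
    = ((n.choose k : ℝ))⁻¹ * ((n-1).choose k : ℝ) *
      (cond c ((1-b) * gconv (n-1) k a b x) (b * gconv (n-1) k a b (x-1))) := by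
  classical
  have hinner : ∀ γ ∈ locksets n k,
      (∑ s : Fin n → Bool, if i ∉ γ ∧ s i = c ∧ zeros n s = x then jointP n k a b γ s else 0)
      = if i ∉ γ then ((n.choose k : ℝ))⁻¹ *
          (cond c ((1-b) * gconv (n-1) k a b x) (b * gconv (n-1) k a b (x-1))) else 0 := by
    intro γ hγ
    have hγc : γ.card = k := (Finset.mem_powersetCard.mp hγ).2
    by_cases hiγ : i ∉ γ
    · rw [if_pos hiγ]
      have hterm : ∀ s : Fin n → Bool,
          (if i ∉ γ ∧ s i = c ∧ zeros n s = x then jointP n k a b γ s else 0)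
          = ((n.choose k : ℝ))⁻¹ * (if s i = c ∧ zeros n s = x then psg n a b γ s else 0) := by
        intro s
        by_cases hs : s i = c ∧ zeros n s = x
        · rw [if_pos ⟨hiγ, hs⟩, if_pos hs]; rfl
        · rw [if_neg (fun hh => hs hh.2), if_neg hs, mul_zero]
      rw [Fintype.sum_congr _ _ hterm, ← Finset.mul_sum, sum_s a b x hx γ i hiγ c, hγc]
    · rw [if_neg hiγ]
      refine Finset.sum_eq_zero fun s _ => if_neg (fun hh => hiγ hh.1)
  rw [Finset.sum_congr rfl hinner, ← Finset.sum_filter]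
  have hfilt : (locksets n k).filter (fun γ => i ∉ γ) = Finset.powersetCard k (univ.erase i) := by
    ext γ
    simp only [locksets, Finset.mem_filter, Finset.mem_powersetCard, Finset.subset_erase]
    tauto
  rw [hfilt, Finset.sum_const, Finset.card_powersetCard, nsmul_eq_mul]
  have hcard : (univ.erase i).card = n - 1 := by
    rw [Finset.card_erase_of_mem (mem_univ i)]
    simp
  rw [hcard, mul_assoc]
  ring

end Stmt9Aux

open Stmt9Aux in
/-- In the symmetric model A(n,k) with k < n, for 0 < x < n, the key ratio
r_{n,k}(x) = P(T=0|S=0,N=x)/P(T=0|S=1,N=x) equals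
(b/(1-b)) · ((n-x)/x) · g_{n-1,k}(x-1)/g_{n-1,k}(x). -/
theorem stmt9 (n k x : ℕ) (hk : k < n) (hx0 : 0 < x) (hxn : x < n) (a b : ℝ)
    (ha0 : 0 < a) (ha1 : a < 1) (hb0 : 0 < b) (hb1 : b < 1) (i : Fin n)
    (hden0 : 0 < ∑ γ ∈ locksets n k, ∑ s : Fin n → Bool,
        if s i = false ∧ zeros n s = x then jointP n k a b γ s else 0)
    (hden1 : 0 < ∑ γ ∈ locksets n k, ∑ s : Fin n → Bool,
        if s i = true ∧ zeros n s = x then jointP n k a b γ s else 0) :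
    pminus n k a b i x / pplus n k a b i x =
      (b / (1 - b)) * (((n : ℝ) - x) / x) *
        (gconv (n - 1) k a b (x - 1) / gconv (n - 1) k a b x) := by
    classical
  have hn0 : (n : ℝ) ≠ 0 := Nat.cast_ne_zero.mpr (by omega)
  unfold pminus pplus
  set P := ∑ γ ∈ locksets n k, ∑ s : Fin n → Bool,
    (if zeros n s = x then jointP n k a b γ s else 0) with hP
  set Df := ∑ γ ∈ locksets n k, ∑ s : Fin n → Bool,
    (if s i = false ∧ zeros n s = x then jointP n k a b γ s else 0) with hDf
  set Dt := ∑ γ ∈ locksets n k, ∑ s : Fin n → Bool,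
    (if s i = true ∧ zeros n s = x then jointP n k a b γ s else 0) with hDt
  have hNf : (n : ℝ) * Df = (x : ℝ) * P := by
    have h1 := D_count (n := n) k x a b false
    have h2 : (∑ j : Fin n, ∑ γ ∈ locksets n k, ∑ s : Fin n → Bool,
        if s j = false ∧ zeros n s = x then jointP n k a b γ s else 0)
        = ∑ _j : Fin n, Df :=
      Finset.sum_congr rfl fun j _ => D_symm k x a b false j i
    rw [h2] at h1
    simpa [Finset.sum_const, Finset.card_univ, mul_comm] using h1
  have hNt : (n : ℝ) * Dt = ((n : ℝ) - x) * P := by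
    have h1 := D_count (n := n) k x a b true
    have h2 : (∑ j : Fin n, ∑ γ ∈ locksets n k, ∑ s : Fin n → Bool,
        if s j = true ∧ zeros n s = x then jointP n k a b γ s else 0)
        = ∑ _j : Fin n, Dt :=
      Finset.sum_congr rfl fun j _ => D_symm k x a b true j i
    rw [h2] at h1
    have hcast : ((n - x : ℕ) : ℝ) = (n : ℝ) - x := by
      push_cast [Nat.cast_sub hxn.le]
      ring
    simp only [Bool.cond_true, hcast] at h1
    simpa [Finset.sum_const, Finset.card_univ, mul_comm] using h1
  have hrel : (x : ℝ) * Dt = ((n : ℝ) - x) * Df := by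
    refine mul_left_cancel₀ hn0 ?_
    calc (n : ℝ) * ((x : ℝ) * Dt) = (x : ℝ) * ((n : ℝ) * Dt) := by ring
      _ = (x : ℝ) * (((n : ℝ) - x) * P) := by rw [hNt]
      _ = ((n : ℝ) - x) * ((x : ℝ) * P) := by ring
      _ = ((n : ℝ) - x) * ((n : ℝ) * Df) := by rw [hNf]
      _ = (n : ℝ) * (((n : ℝ) - x) * Df) := by ring
  have hnum0 := numer (n := n) k x a b hx0 i false
  have hnum1 := numer (n := n) k x a b hx0 i true
  simp only [Bool.cond_false] at hnum0
  simp only [Bool.cond_true] at hnum1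
  rw [hnum0, hnum1]
  have hxR : (x : ℝ) ≠ 0 := Nat.cast_ne_zero.mpr (by omega)
  have hDf0 : Df ≠ 0 := ne_of_gt hden0
  have hb1' : (1 : ℝ) - b ≠ 0 := by intro h; nlinarith
  have hCinv : ((n.choose k : ℝ))⁻¹ ≠ 0 :=
    inv_ne_zero (Nat.cast_ne_zero.mpr (Nat.choose_pos hk.le).ne')
  have hC1 : (((n-1).choose k : ℝ)) ≠ 0 :=
    Nat.cast_ne_zero.mpr (Nat.choose_pos (by omega)).ne'
  by_cases hg : gconv (n-1) k a b x = 0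
  · rw [hg]
    simp
  · have hDt_eq : Dt = ((n : ℝ) - x) * Df / x := by
      rw [eq_div_iff hxR]
      linear_combination hrel
    have hK : ((n.choose k : ℝ))⁻¹ * ((n-1).choose k : ℝ) ≠ 0 := mul_ne_zero hCinv hC1
    have hnx : (n : ℝ) - x ≠ 0 := by
      have hlt : (x : ℝ) < n := by exact_mod_cast hxn
      intro h; linarith
    rw [hDt_eq, div_div_div_comm, mul_div_mul_left _ _ hK]
    have hDD : Df / (((n : ℝ) - x) * Df / x) = (x : ℝ) / ((n : ℝ) - x) := by
      rw [div_div_eq_mul_div, mul_comm ((n : ℝ) - (x:ℝ)) Df, mul_div_mul_left _ _ hDf0]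
    rw [hDD]
    field_simp
end

section
/- For 0 < x < n, the ratio r_{n,k}(x) can be written as r_{n,k}(x) = ((n−x)/x) · [∑_i C(k,i) C(n−k−1, x−i−1) c^{−i}] / [∑_i C(k,i) C(n−k−1, x−i) c^{−i}], where c = (a/(1−a))·(b/(1−b)); in particular r_{n,k}(x) depends on (a,b) only through c, so r_{n,k}(x|a,b) = r_{n,k}(x|b,a). -/
open Finset

/-- The ratio r_{n,k}(x) = (b/(1-b))·((n-x)/x)·g_{n-1,k}(x-1)/g_{n-1,k}(x). -/
noncomputable def ratioA (n k : ℕ) (a b : ℝ) (x : ℕ) : ℝ :=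
  (b / (1 - b)) * (((n : ℝ) - x) / x) *
    (gconv (n - 1) k a b (x - 1) / gconv (n - 1) k a b x)

/-!
With `l = n-1-k`, each term of the convolution `g_{n-1,k}(x)` factors as
`C(k,j)(1-a)ʲa^(k-j) · C(l,x-j)b^(x-j)(1-b)^(l-x+j) = aᵏ(1-b)ˡ(b/(1-b))ˣ · C(k,j)C(l,x-j)c⁻ʲ`,
so `g(x-1)` and `g(x)` share the prefactor `aᵏ(1-b)ˡ(b/(1-b))^(x-1)` and the leftover `b/(1-b)`
cancels the one in front of `r`. What remains is a ratio of two sums in `c⁻¹` alone, and `c` is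
symmetric in `a` and `b`.
-/

/-- At `t = 1` this is Vandermonde's `C(k+l,x)`. -/
noncomputable def weightedVandermonde (k l x : ℕ) (t : ℝ) : ℝ :=
  ∑ j ∈ range (x + 1), (k.choose j : ℝ) * (l.choose (x - j) : ℝ) * t ^ j

lemma weightedVandermonde_pred (k l : ℕ) {x : ℕ} (hx : 0 < x) (t : ℝ) :
    weightedVandermonde k l (x - 1) t =
      ∑ i ∈ range x, (k.choose i : ℝ) * (l.choose (x - i - 1) : ℝ) * t ^ i := by
  simp only [weightedVandermonde, Nat.sub_add_cancel hx, Nat.sub_right_comm x _ 1]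

lemma binpmf_mul_binpmf_eq {p q : ℝ} (hp : p ≠ 1) (hq0 : q ≠ 0) (hq1 : q ≠ 1)
    {k l x j : ℕ} (hjx : j ≤ x) :
    binpmf k p j * binpmf l q (x - j) =
      (1 - p) ^ k * (1 - q) ^ l * (q / (1 - q)) ^ x *
        ((k.choose j : ℝ) * (l.choose (x - j) : ℝ) * (p * (1 - q) / ((1 - p) * q)) ^ j) := by
  have hp' : 1 - p ≠ 0 := sub_ne_zero.mpr hp.symm
  have hq' : 1 - q ≠ 0 := sub_ne_zero.mpr hq1.symm
  rcases lt_or_ge k j with hkj | hjk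
  · simp [binpmf, Nat.choose_eq_zero_of_lt hkj]
  rcases lt_or_ge l (x - j) with hlx | hxl
  · simp [binpmf, Nat.choose_eq_zero_of_lt hlx]
  obtain ⟨u, rfl⟩ := Nat.exists_eq_add_of_le hjk
  obtain ⟨v, rfl⟩ := Nat.exists_eq_add_of_le hjx
  obtain ⟨w, rfl⟩ := Nat.exists_eq_add_of_le hxl
  simp only [binpmf, Nat.add_sub_cancel_left]
  rw [div_pow, div_pow, mul_pow, mul_pow, pow_add, pow_add, pow_add, pow_add]
  field_simp

lemma sum_binpmf_mul_binpmf {p q : ℝ} (hp : p ≠ 1) (hq0 : q ≠ 0) (hq1 : q ≠ 1) (k l x : ℕ) :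
    ∑ j ∈ range (x + 1), binpmf k p j * binpmf l q (x - j) =
      (1 - p) ^ k * (1 - q) ^ l * (q / (1 - q)) ^ x *
        weightedVandermonde k l x (p * (1 - q) / ((1 - p) * q)) := by
  rw [weightedVandermonde, mul_sum]
  exact sum_congr rfl fun j hj ↦
    binpmf_mul_binpmf_eq hp hq0 hq1 (Nat.lt_succ_iff.mp (mem_range.mp hj))

lemma gconv_eq_mul_weightedVandermonde {a b : ℝ} (ha : a ≠ 0) (hb0 : b ≠ 0) (hb1 : b ≠ 1) (m k x : ℕ) :
    gconv m k a b x = a ^ k * (1 - b) ^ (m - k) * (b / (1 - b)) ^ x *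
      weightedVandermonde k (m - k) x (1 / (a / (1 - a) * (b / (1 - b)))) := by
  have h1a : 1 - (1 - a) = a := sub_sub_cancel 1 a
  rw [gconv, sum_binpmf_mul_binpmf (by simpa using ha) hb0 hb1, h1a]
  congr 2
  field_simp

lemma ratioA_eq_div_weightedVandermonde {a b : ℝ} (ha : a ≠ 0) (hb0 : b ≠ 0) (hb1 : b ≠ 1)
    (n k : ℕ) {x : ℕ} (hx : 0 < x) :
    ratioA n k a b x = ((n : ℝ) - x) / x *
      (weightedVandermonde k (n - 1 - k) (x - 1) (1 / (a / (1 - a) * (b / (1 - b)))) /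
        weightedVandermonde k (n - 1 - k) x (1 / (a / (1 - a) * (b / (1 - b))))) := by
  obtain ⟨y, rfl⟩ := Nat.exists_eq_add_of_lt hx
  have hb' : 1 - b ≠ 0 := sub_ne_zero.mpr hb1.symm
  have hodds : b / (1 - b) ≠ 0 := div_ne_zero hb0 hb'
  have hcommon : a ^ k * (1 - b) ^ (n - 1 - k) * (b / (1 - b)) ^ y ≠ 0 := by
    simp [ha, hb', hodds]
  have hgconv : gconv (n - 1) k a b y / gconv (n - 1) k a b (y + 1) =
      weightedVandermonde k (n - 1 - k) y (1 / (a / (1 - a) * (b / (1 - b)))) /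
        (b / (1 - b) *
          weightedVandermonde k (n - 1 - k) (y + 1) (1 / (a / (1 - a) * (b / (1 - b))))) := by
    rw [gconv_eq_mul_weightedVandermonde ha hb0 hb1, gconv_eq_mul_weightedVandermonde ha hb0 hb1,
      pow_succ, ← mul_assoc (a ^ k * (1 - b) ^ (n - 1 - k)), mul_assoc _ (b / (1 - b)),
      mul_div_mul_left _ _ hcommon]
  rw [ratioA, zero_add, Nat.add_sub_cancel, hgconv, mul_comm (b / (1 - b)), mul_assoc,
    ← mul_div_assoc, mul_div_mul_left _ _ hodds]

theorem stmt11_general (n k x : ℕ) (hx0 : 0 < x)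
    (a b : ℝ) (ha0 : 0 < a) (ha1 : a < 1) (hb0 : 0 < b) (hb1 : b < 1)
    (c : ℝ) (hc : c = (a / (1 - a)) * (b / (1 - b))) :
    (ratioA n k a b x =
      (((n : ℝ) - x) / x) *
        ((∑ i ∈ Finset.range x,
            (k.choose i : ℝ) * ((n - k - 1).choose (x - i - 1) : ℝ) * (1 / c) ^ i) /
          (∑ i ∈ Finset.range (x + 1),
            (k.choose i : ℝ) * ((n - k - 1).choose (x - i) : ℝ) * (1 / c) ^ i))) ∧
    ratioA n k a b x = ratioA n k b a x := by
  subst hc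
  constructor
  · rw [ratioA_eq_div_weightedVandermonde ha0.ne' hb0.ne' hb1.ne n k hx0,
      weightedVandermonde_pred _ _ hx0, weightedVandermonde, Nat.sub_right_comm n k 1]
  · rw [ratioA_eq_div_weightedVandermonde ha0.ne' hb0.ne' hb1.ne n k hx0,
      ratioA_eq_div_weightedVandermonde hb0.ne' ha0.ne' ha1.ne n k hx0, mul_comm (a / (1 - a))]

/-- For 0 < x < n, the ratio r_{n,k}(x) equals
((n-x)/x) · [∑ᵢ C(k,i)C(n-k-1,x-i-1)c^{-i}] / [∑ᵢ C(k,i)C(n-k-1,x-i)c^{-i}],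
where c = (a/(1-a))·(b/(1-b)); in particular it depends on (a,b) only through c,
so that r_{n,k}(x | a, b) = r_{n,k}(x | b, a). -/
theorem stmt11 (n k x : ℕ) (hk1 : 1 ≤ k) (hkn : k < n) (hx0 : 0 < x) (hxn : x < n)
    (a b : ℝ) (ha0 : 0 < a) (ha1 : a < 1) (hb0 : 0 < b) (hb1 : b < 1)
    (c : ℝ) (hc : c = (a / (1 - a)) * (b / (1 - b))) :
    (ratioA n k a b x =
      (((n : ℝ) - x) / x) *
        ((∑ i ∈ Finset.range x,
            (k.choose i : ℝ) * ((n - k - 1).choose (x - i - 1) : ℝ) * (1 / c) ^ i) /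
          (∑ i ∈ Finset.range (x + 1),
            (k.choose i : ℝ) * ((n - k - 1).choose (x - i) : ℝ) * (1 / c) ^ i))) ∧
    ratioA n k a b x = ratioA n k b a x :=
  stmt11_general n k x hx0 a b ha0 ha1 hb0 hb1 c hc
end

section
/- Let r > 1, 0 < q < 1, p = 1−q, and define d = min{i ≥ 1 : r q^i < 1}. For nonnegative integers i, j, the incremental utility Δ(i−1, j+1) := p·q^j·p⁺·(r q^{i−j−1} − 1) of moving a bomb from a minus box with i bombs to a plus box with j bombs (where p⁺ > 0) is negative whenever i − j > d and r q^{d−1} > 1; and the reverse move has positive increment whenever j ≥ 1 and i − j < d − 1. -/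
/-- Let r > 1, 0 < q < 1, p = 1 - q, and let d = min{i ≥ 1 : r·q^i < 1}
(expressed by the hypotheses hd1, hd2, hd3). If r·q^{d-1} > 1 then:
the incremental utility Δ(i-1, j+1) = p·q^j·p⁺·(r·q^{i-j-1} - 1) of moving a bomb
from a minus box with i bombs to a plus box with j bombs is negative whenever
i - j > d; and the reverse move has positive increment
p·q^{j-1}·p⁺·(r·q^{i-j+1} - 1) whenever j ≥ 1 and i - j < d - 1. -/
theorem stmt17 (r q p pp : ℝ) (d : ℕ)
    (hr : 1 < r) (hq0 : 0 < q) (hq1 : q < 1) (hp : p = 1 - q) (hpp : 0 < pp)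
    (hd1 : 1 ≤ d) (hd2 : r * q ^ d < 1) (hd3 : ∀ i : ℕ, 1 ≤ i → i < d → 1 ≤ r * q ^ i)
    (hstrict : 1 < r * q ^ (d - 1)) :
    ∀ i j : ℕ,
      (d < i - j → p * q ^ j * pp * (r * q ^ (i - j - 1) - 1) < 0) ∧
      (1 ≤ j → i - j < d - 1 → 0 < p * q ^ (j - 1) * pp * (r * q ^ (i - j + 1) - 1)) := by
  have hp0 : 0 < p := by rw [hp]; linarith
  intro i j
  constructor
  · intro h
    have hle : d ≤ i - j - 1 := by omega
    have hq : q ^ (i - j - 1) ≤ q ^ d :=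
      pow_le_pow_of_le_one hq0.le hq1.le hle
    have : r * q ^ (i - j - 1) < 1 := by
      calc r * q ^ (i - j - 1) ≤ r * q ^ d := by
            apply mul_le_mul_of_nonneg_left hq (by linarith)
        _ < 1 := hd2
    have hpos : 0 < p * q ^ j * pp := by positivity
    nlinarith
  · intro hj h
    have hle : i - j + 1 ≤ d - 1 := by omega
    have hq : q ^ (d - 1) ≤ q ^ (i - j + 1) :=
      pow_le_pow_of_le_one hq0.le hq1.le hle
    have : 1 < r * q ^ (i - j + 1) := by
      calc 1 < r * q ^ (d - 1) := hstrict
        _ ≤ r * q ^ (i - j + 1) := by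
            apply mul_le_mul_of_nonneg_left hq (by linarith)
    have hpos : 0 < p * q ^ (j - 1) * pp := by positivity
    nlinarith
end
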